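/- If T is a cut-triangle of an ℳ-complex K, then for each edge eᵢ of T, each of the two equivalence classes of 2-cells induced by T contains exactly one 2-cell having eᵢ as an edge. -/

import Mathlib

open scoped Classical

/-- `e` is an edge of the 2-cell `u`. -/
def edgeOf {K2 K1 : Type*} (d2 : Fin 3 → K2 → K1) (e : K1) (u : K2) : Prop :=
  ∃ i, d2 i u = e

/-- `w` is a vertex of the 2-cell `u` (a face of a face of `u`). -/
def vertexOf {K2 K1 K0 : Type*} (d2 : Fin 3 → K2 → K1) (d1 : Fin 2 → K1 → K0)
    (w : K0) (u : K2) : Prop :=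
  ∃ i j, d1 j (d2 i u) = w

/-- Two 2-cells are `w`-neighbours when they share an edge having `w` as a vertex. -/
def wNbr {K2 K1 K0 : Type*} (d2 : Fin 3 → K2 → K1) (d1 : Fin 2 → K1 → K0)
    (w : K0) (u u' : K2) : Prop :=
  ∃ e : K1, edgeOf d2 e u ∧ edgeOf d2 e u' ∧ ∃ j, d1 j e = w

/-- The (signed) incidence coefficient of the 1-cell `e` in the boundary of the
2-cell `u`: the coefficient of `e` in `d₀u - d₁u + d₂u`. -/
noncomputable def incCoef {K2 K1 : Type*} (d2 : Fin 3 → K2 → K1) (u : K2) (e : K1) : ℤ :=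
  ∑ i : Fin 3, if d2 i u = e then (if i = 1 then -1 else 1) else 0

/-- The boundary `∂₂` of a 2-chain, as a coefficient function on 1-cells. -/
noncomputable def bdry2 {K2 K1 : Type*} (d2 : Fin 3 → K2 → K1) (c : K2 →₀ ℤ) : K1 → ℤ :=
  fun e => c.sum fun u n => n * incCoef d2 u e

/-- An `ℳ`-complex: a connected Δ-complex which is (0) finite, (1) homogeneous
2-dimensional, (2) regular, (3) with every 1-cell an edge of exactly two 2-cells,
(4) with linked links of 0-cells, and (5) orientable (its group of 2-cycles is
infinite cyclic). -/
structure MComplex (K2 K1 K0 : Type*) : Type _ where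
  d2 : Fin 3 → K2 → K1
  d1 : Fin 2 → K1 → K0
  finite2 : Finite K2
  finite1 : Finite K1
  finite0 : Finite K0
  simp01 : ∀ u, d1 0 (d2 1 u) = d1 0 (d2 0 u)
  simp02 : ∀ u, d1 0 (d2 2 u) = d1 1 (d2 0 u)
  simp12 : ∀ u, d1 1 (d2 2 u) = d1 1 (d2 1 u)
  homog1 : ∀ e : K1, ∃ u : K2, edgeOf d2 e u
  homog0 : ∀ w : K0, ∃ (e : K1) (j : Fin 2), d1 j e = w
  regular2 : ∀ u : K2, Function.Injective fun i => d2 i u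
  regular1 : ∀ e : K1, d1 0 e ≠ d1 1 e
  edge_two : ∀ e : K1, ∃ u v : K2, u ≠ v ∧ edgeOf d2 e u ∧ edgeOf d2 e v ∧
      ∀ x : K2, edgeOf d2 e x → x = u ∨ x = v
  linked : ∀ (w : K0) (u u' : K2), vertexOf d2 d1 w u → vertexOf d2 d1 w u' →
      Relation.ReflTransGen (wNbr d2 d1 w) u u'
  connected : ∀ w w' : K0, Relation.ReflTransGen
      (fun a b => ∃ e : K1, (d1 0 e = a ∧ d1 1 e = b) ∨ (d1 0 e = b ∧ d1 1 e = a)) w w'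
  orientable : ∃ c : K2 →₀ ℤ, c ≠ 0 ∧ bdry2 d2 c = 0 ∧
      ∀ c' : K2 →₀ ℤ, bdry2 d2 c' = 0 → ∃ k : ℤ, c' = k • c

/-- The (signed) incidence coefficient of the 0-cell `v` in the boundary
`d₀e - d₁e` of the 1-cell `e`. -/
noncomputable def inc1 {K1 K0 : Type*} (d1 : Fin 2 → K1 → K0) (e : K1) (v : K0) : ℤ :=
  (if d1 0 e = v then 1 else 0) - (if d1 1 e = v then 1 else 0)

/-- The three 1-cells `e 0`, `e 1`, `e 2` form a triangle:
`∂₁(e₀ - e₁ + e₂) = 0`. -/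
def IsTriangle {K1 K0 : Type*} (d1 : Fin 2 → K1 → K0) (e : Fin 3 → K1) : Prop :=
  ∀ v : K0, inc1 d1 (e 0) v - inc1 d1 (e 1) v + inc1 d1 (e 2) v = 0

/-- Two 2-cells share an edge lying outside the triangle `e`. -/
def shareOut {K2 K1 : Type*} (d2 : Fin 3 → K2 → K1) (e : Fin 3 → K1) (u u' : K2) : Prop :=
  ∃ f : K1, (∀ i, f ≠ e i) ∧ edgeOf d2 f u ∧ edgeOf d2 f u'

/-- `e` is a *cut-triangle* of the `ℳ`-complex `M`: its edges form a 1-cycle, and the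
transitive closure of the relation of sharing an edge outside `e` is an equivalence
relation on the 2-cells with exactly two classes. -/
def IsCutTriangle {K2 K1 K0 : Type*} (M : MComplex K2 K1 K0) (e : Fin 3 → K1) : Prop :=
  IsTriangle M.d1 e ∧
  Equivalence (Relation.TransGen (shareOut M.d2 e)) ∧
  ∃ a b : K2, ¬ Relation.TransGen (shareOut M.d2 e) a b ∧
    ∀ u : K2, Relation.TransGen (shareOut M.d2 e) u a ∨
      Relation.TransGen (shareOut M.d2 e) u b

section Aux
variable {K2 K1 K0 : Type*}

lemma incCoef_of_not_edge {d2 : Fin 3 → K2 → K1} {f : K1} {u : K2}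
    (h : ¬ edgeOf d2 f u) : incCoef d2 u f = 0 := by
  unfold incCoef
  apply Finset.sum_eq_zero
  intro i _
  rw [if_neg]
  exact fun hi => h ⟨i, hi⟩

lemma incCoef_of_edge {d2 : Fin 3 → K2 → K1} {u : K2}
    (hreg : Function.Injective fun i => d2 i u) {j : Fin 3} :
    incCoef d2 u (d2 j u) = if j = 1 then -1 else 1 := by
  unfold incCoef
  rw [Finset.sum_eq_single j]
  · simp
  · intro i _ hij
    rw [if_neg]
    exact fun hi => hij (hreg hi)
  · simp

lemma incCoef_sq {d2 : Fin 3 → K2 → K1} {u : K2} {f : K1}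
    (hreg : Function.Injective fun i => d2 i u) (h : edgeOf d2 f u) :
    incCoef d2 u f * incCoef d2 u f = 1 := by
  obtain ⟨j, rfl⟩ := h
  rw [incCoef_of_edge hreg]
  split <;> ring

lemma bdry2_pair (M : MComplex K2 K1 K0) (c : K2 →₀ ℤ) (f : K1) {u v : K2}
    (huv : u ≠ v) (hu : edgeOf M.d2 f u) (hv : edgeOf M.d2 f v)
    (hall : ∀ x : K2, edgeOf M.d2 f x → x = u ∨ x = v) :
    bdry2 M.d2 c f = c u * incCoef M.d2 u f + c v * incCoef M.d2 v f := by
  haveI := M.finite2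
  haveI := Fintype.ofFinite K2
  unfold bdry2
  rw [Finsupp.sum_fintype _ _ (fun u => by ring)]
  rw [← Finset.sum_subset (Finset.subset_univ ({u, v} : Finset K2))]
  · rw [Finset.sum_pair huv]
  · intro x _ hx
    simp only [Finset.mem_insert, Finset.mem_singleton] at hx
    push_neg at hx
    have : ¬ edgeOf M.d2 f x := fun h => by rcases hall x h with h | h <;> tauto
    rw [incCoef_of_not_edge this, mul_zero]

lemma inc1_cases (d1 : Fin 2 → K1 → K0) (f : K1) (v : K0) :
    inc1 d1 f v = 1 ∨ inc1 d1 f v = 0 ∨ inc1 d1 f v = -1 := by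
  unfold inc1
  split <;> split <;> simp

lemma inc1_self (M : MComplex K2 K1 K0) (f : K1) : inc1 M.d1 f (M.d1 0 f) = 1 := by
  unfold inc1
  rw [if_pos rfl, if_neg (M.regular1 f).symm]; ring

end Aux

section Aux2
variable {K2 K1 K0 : Type*}

lemma bdry_bdry (M : MComplex K2 K1 K0) [Fintype K2] [Fintype K1]
    (c : K2 →₀ ℤ) (v : K0) :
    ∑ f : K1, bdry2 M.d2 c f * inc1 M.d1 f v = 0 := by
  have h1 : ∀ f, bdry2 M.d2 c f = ∑ u : K2, c u * incCoef M.d2 u f := by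
    intro f
    unfold bdry2
    rw [Finsupp.sum_fintype _ _ (fun u => by ring)]
  simp only [h1, Finset.sum_mul]
  rw [Finset.sum_comm]
  apply Finset.sum_eq_zero
  intro u _
  have h2 : ∀ f : K1, c u * incCoef M.d2 u f * inc1 M.d1 f v
      = ∑ i : Fin 3, (if M.d2 i u = f then (c u * (if i = 1 then -1 else 1) * inc1 M.d1 f v) else 0) := by
    intro f
    unfold incCoef
    rw [Finset.mul_sum, Finset.sum_mul]
    apply Finset.sum_congr rfl
    intro i _
    split <;> ring
  simp only [h2]
  rw [Finset.sum_comm]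
  have h3 : ∀ i : Fin 3, ∑ f : K1, (if M.d2 i u = f then (c u * (if i = 1 then -1 else 1) * inc1 M.d1 f v) else 0)
      = c u * (if i = 1 then -1 else 1) * inc1 M.d1 (M.d2 i u) v := by
    intro i
    rw [Finset.sum_ite_eq (Finset.univ) (M.d2 i u) (fun f => c u * (if i = 1 then -1 else 1) * inc1 M.d1 f v)]
    simp
  simp only [h3]
  rw [Fin.sum_univ_three]
  simp only [inc1]
  rw [M.simp01 u, M.simp02 u, M.simp12 u]
  norm_num [show (2:Fin 3) ≠ 1 by decide, show (0:Fin 3) ≠ 1 by decide]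
  ring
end Aux2

section Aux3
variable {K2 K1 K0 : Type*}

lemma indep (M : MComplex K2 K1 K0) (x y z : K1) (s t : ℤ)
    (hs : s = 1 ∨ s = -1) (ht : t = 1 ∨ t = -1)
    (hx : ∀ v, inc1 M.d1 x v = s * inc1 M.d1 y v + t * inc1 M.d1 z v)
    (α β : ℤ) (hαβ : ∀ v, α * inc1 M.d1 y v + β * inc1 M.d1 z v = 0) :
    α = 0 ∧ β = 0 := by
  have hα : α = 0 := by
    by_contra hα
    set c := inc1 M.d1 z (M.d1 0 y) with hc
    have h1 := hαβ (M.d1 0 y)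
    rw [inc1_self M y, mul_one] at h1
    have hcc : c = 1 ∨ c = -1 := by
      rcases inc1_cases M.d1 z (M.d1 0 y) with h | h | h
      · left; exact h
      · exfalso; rw [h, mul_zero, add_zero] at h1; exact hα h1
      · right; exact h
    have hc2 : c * c = 1 := by rcases hcc with h | h <;> rw [h] <;> ring
    -- α = -β * c, so β = -α * c
    have hβ : β = -α * c := by
      have : α * c + β * (c * c) = 0 := by
        have := mul_eq_zero_of_left h1 c
        linarith [this, mul_comm α c]
      rw [hc2, mul_one] at this
      linarith
    -- inc1 z = c * inc1 y pointwise
    have hz : ∀ v, inc1 M.d1 z v = c * inc1 M.d1 y v := by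
      intro v
      have h2 := hαβ v
      rw [hβ] at h2
      have h3 : α * (inc1 M.d1 y v - c * inc1 M.d1 z v) = 0 := by ring_nf; ring_nf at h2; linarith
      have h4 : inc1 M.d1 y v = c * inc1 M.d1 z v := by
        rcases mul_eq_zero.mp h3 with h | h
        · exact absurd h hα
        · linarith
      have := congrArg (c * ·) h4
      rw [← mul_assoc, hc2, one_mul] at this
      linarith
    have h5 := hx (M.d1 0 x)
    rw [inc1_self M x, hz (M.d1 0 x)] at h5
    rcases inc1_cases M.d1 y (M.d1 0 x) with h | h | h <;>
      rw [h] at h5 <;> rcases hs with rfl | rfl <;> rcases ht with rfl | rfl <;>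
      rcases hcc with h' | h' <;> rw [h'] at h5 <;> omega
  refine ⟨hα, ?_⟩
  have h6 := hαβ (M.d1 0 z)
  rw [hα, inc1_self M z, zero_mul, zero_add, mul_one] at h6
  exact h6

lemma triangle_inj (M : MComplex K2 K1 K0) {e : Fin 3 → K1}
    (htri : IsTriangle M.d1 e) : Function.Injective e := by
  have h01 : e 0 = e 1 → False := by
    intro hejk
    have h := htri (M.d1 0 (e 2))
    rw [hejk, inc1_self] at h
    omega
  have h12 : e 1 = e 2 → False := by
    intro hejk
    have h := htri (M.d1 0 (e 0))
    rw [← hejk, inc1_self] at h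
    omega
  have h02 : e 0 = e 2 → False := by
    intro hejk
    have h := htri (M.d1 0 (e 1))
    rw [hejk, inc1_self] at h
    rcases inc1_cases M.d1 (e 2) (M.d1 0 (e 1)) with h' | h' | h' <;> omega
  intro j k hejk
  by_contra hjk
  fin_cases j <;> fin_cases k <;> simp_all

end Aux3

section Aux4
variable {K2 K1 K0 : Type*}

/-- Two 2-cells sharing any edge. -/
def shareEdge {K2 K1 : Type*} (d2 : Fin 3 → K2 → K1) (u u' : K2) : Prop :=
  ∃ f : K1, edgeOf d2 f u ∧ edgeOf d2 f u'

lemma vertexOf_of_edge {d2 : Fin 3 → K2 → K1} {d1 : Fin 2 → K1 → K0}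
    {f : K1} {u : K2} (h : edgeOf d2 f u) (j : Fin 2) : vertexOf d2 d1 (d1 j f) u := by
  obtain ⟨i, hi⟩ := h
  exact ⟨i, j, by rw [hi]⟩

lemma conn_vertex (M : MComplex K2 K1 K0) {w : K0} {u u' : K2}
    (hu : vertexOf M.d2 M.d1 w u) (hu' : vertexOf M.d2 M.d1 w u') :
    Relation.ReflTransGen (shareEdge M.d2) u u' := by
  refine Relation.ReflTransGen.mono ?_ u u' (M.linked w u u' hu hu')
  rintro x y ⟨f, hf1, hf2, -⟩
  exact ⟨f, hf1, hf2⟩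

lemma conn_all (M : MComplex K2 K1 K0) (u u' : K2) :
    Relation.ReflTransGen (shareEdge M.d2) u u' := by
  have main : ∀ w w' : K0, Relation.ReflTransGen
      (fun a b => ∃ e : K1, (M.d1 0 e = a ∧ M.d1 1 e = b) ∨ (M.d1 0 e = b ∧ M.d1 1 e = a)) w w' →
      ∀ x y : K2, vertexOf M.d2 M.d1 w x → vertexOf M.d2 M.d1 w' y →
      Relation.ReflTransGen (shareEdge M.d2) x y := by
    intro w w' hww
    induction hww with
    | refl => intro x y hx hy; exact conn_vertex M hx hy
    | tail hpath step ih =>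
      rename_i w1 w2
      intro x y hx hy
      obtain ⟨f, hf⟩ := step
      obtain ⟨z, hz⟩ := M.homog1 f
      have hz1 : vertexOf M.d2 M.d1 w1 z := by
        rcases hf with ⟨h1, h2⟩ | ⟨h1, h2⟩
        · rw [← h1]; exact vertexOf_of_edge hz 0
        · rw [← h2]; exact vertexOf_of_edge hz 1
      have hz2 : vertexOf M.d2 M.d1 w2 z := by
        rcases hf with ⟨h1, h2⟩ | ⟨h1, h2⟩
        · rw [← h2]; exact vertexOf_of_edge hz 1
        · rw [← h1]; exact vertexOf_of_edge hz 0
      exact (ih x z hx hz1).trans (conn_vertex M hz2 hy)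
  exact main _ _ (M.connected _ _) u u'
    ⟨0, 0, rfl⟩ ⟨0, 0, rfl⟩

lemma c_ne_zero (M : MComplex K2 K1 K0) {c : K2 →₀ ℤ}
    (hcyc : bdry2 M.d2 c = 0) (hc0 : c ≠ 0) : ∀ u, c u ≠ 0 := by
  have step : ∀ x y : K2, shareEdge M.d2 x y → (c x ≠ 0 → c y ≠ 0) := by
    intro x y ⟨f, hfx, hfy⟩ hcx
    by_cases hxy : x = y
    · rwa [← hxy]
    obtain ⟨u₁, v₁, huv, hu1, hv1, hall⟩ := M.edge_two f
    have hb : c u₁ * incCoef M.d2 u₁ f + c v₁ * incCoef M.d2 v₁ f = 0 := by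
      rw [← bdry2_pair M c f huv hu1 hv1 hall, hcyc]; rfl
    have hxy' : (x = u₁ ∧ y = v₁) ∨ (x = v₁ ∧ y = u₁) := by
      rcases hall x hfx with rfl | rfl <;> rcases hall y hfy with rfl | rfl <;> tauto
    have sq1 := incCoef_sq (M.regular2 u₁) hu1
    have sq2 := incCoef_sq (M.regular2 v₁) hv1
    intro hcy
    rcases hxy' with ⟨rfl, rfl⟩ | ⟨rfl, rfl⟩
    · rw [hcy, zero_mul, add_zero] at hb
      rcases mul_eq_zero.mp hb with h | h
      · exact hcx h
      · rw [h, mul_zero] at sq1; omega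
    · rw [hcy, zero_mul, zero_add] at hb
      rcases mul_eq_zero.mp hb with h | h
      · exact hcx h
      · rw [h, mul_zero] at sq2; omega
  obtain ⟨u₀, hu₀⟩ : ∃ u₀, c u₀ ≠ 0 := by
    by_contra hall
    push_neg at hall
    exact hc0 (Finsupp.ext hall)
  intro u
  have hpath := conn_all M u₀ u
  induction hpath with
  | refl => exact hu₀
  | tail _ s ih => exact step _ _ s ih
end Aux4

section Aux5
variable {K2 K1 K0 : Type*}

lemma bdry_zero_of_supp_pair (M : MComplex K2 K1 K0) (c' : K2 →₀ ℤ)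
    (y z x : K1) (s t : ℤ) (hs : s = 1 ∨ s = -1) (ht : t = 1 ∨ t = -1)
    (hx : ∀ v, inc1 M.d1 x v = s * inc1 M.d1 y v + t * inc1 M.d1 z v)
    (hyz : y ≠ z)
    (hsupp : ∀ f : K1, f ≠ y → f ≠ z → bdry2 M.d2 c' f = 0) :
    bdry2 M.d2 c' = 0 := by
  haveI := M.finite2
  haveI := M.finite1
  haveI := Fintype.ofFinite K2
  haveI := Fintype.ofFinite K1
  have hd : ∀ v, bdry2 M.d2 c' y * inc1 M.d1 y v + bdry2 M.d2 c' z * inc1 M.d1 z v = 0 := by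
    intro v
    have h := bdry_bdry M c' v
    rw [← Finset.sum_subset (Finset.subset_univ ({y, z} : Finset K1))] at h
    · rwa [Finset.sum_pair hyz] at h
    · intro f _ hf
      simp only [Finset.mem_insert, Finset.mem_singleton] at hf
      push_neg at hf
      rw [hsupp f hf.1 hf.2, zero_mul]
  obtain ⟨hy0, hz0⟩ := indep M x y z s t hs ht hx _ _ hd
  funext f
  by_cases h1 : f = y
  · rw [h1]; exact hy0
  by_cases h2 : f = z
  · rw [h2]; exact hz0
  exact hsupp f h1 h2
end Aux5

section Aux6
variable {K2 K1 K0 : Type*}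

lemma key_diff (M : MComplex K2 K1 K0) (e : Fin 3 → K1)
    (htri : IsTriangle M.d1 e)
    (hEq : Equivalence (Relation.TransGen (shareOut M.d2 e)))
    (a b : K2) (hab : ¬ Relation.TransGen (shareOut M.d2 e) a b)
    (i : Fin 3) {u₀ v₀ : K2} (huv : u₀ ≠ v₀)
    (hu : edgeOf M.d2 (e i) u₀) (hv : edgeOf M.d2 (e i) v₀)
    (hall : ∀ x : K2, edgeOf M.d2 (e i) x → x = u₀ ∨ x = v₀) :
    ¬ (Relation.TransGen (shareOut M.d2 e) u₀ a ↔
        Relation.TransGen (shareOut M.d2 e) v₀ a) := by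
  set R := Relation.TransGen (shareOut M.d2 e) with hR
  intro H
  obtain ⟨c, hc0, hcyc, hgen⟩ := M.orientable
  haveI := M.finite2
  haveI := Fintype.ofFinite K2
  set g : K2 → ℤ := fun u => if R u a then c u else 0 with hg
  set c' : K2 →₀ ℤ := Finsupp.equivFunOnFinite.symm g with hcdef
  have hc' : ∀ u, c' u = if R u a then c u else 0 := fun u => rfl
  have same : ∀ f : K1, ∀ u₁ v₁ : K2, u₁ ≠ v₁ → edgeOf M.d2 f u₁ → edgeOf M.d2 f v₁ →
      (∀ x, edgeOf M.d2 f x → x = u₁ ∨ x = v₁) → (R u₁ a ↔ R v₁ a) →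
      bdry2 M.d2 c' f = 0 := by
    intro f u₁ v₁ hne h1 h2 hall' hiff
    rw [bdry2_pair M c' f hne h1 h2 hall']
    by_cases hcase : R u₁ a
    · rw [hc', hc', if_pos hcase, if_pos (hiff.mp hcase)]
      have hz : bdry2 M.d2 c f = 0 := by rw [hcyc]; rfl
      rw [bdry2_pair M c f hne h1 h2 hall'] at hz
      exact hz
    · rw [hc', hc', if_neg hcase, if_neg (fun h => hcase (hiff.mpr h)),
        zero_mul, zero_mul, add_zero]
  have hsupp_out : ∀ f : K1, (∀ j, f ≠ e j) → bdry2 M.d2 c' f = 0 := by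
    intro f hf
    obtain ⟨u₁, v₁, hne, h1, h2, hall'⟩ := M.edge_two f
    have hrel : R u₁ v₁ := Relation.TransGen.single ⟨f, hf, h1, h2⟩
    exact same f u₁ v₁ hne h1 h2 hall'
      ⟨fun h => hEq.trans (hEq.symm hrel) h, fun h => hEq.trans hrel h⟩
  have hsupp_i : bdry2 M.d2 c' (e i) = 0 := same (e i) u₀ v₀ huv hu hv hall H
  have einj := triangle_inj M htri
  have hne01 : e 0 ≠ e 1 := fun h => absurd (einj h) (by decide)
  have hne02 : e 0 ≠ e 2 := fun h => absurd (einj h) (by decide)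
  have hne12 : e 1 ≠ e 2 := fun h => absurd (einj h) (by decide)
  have hzero : bdry2 M.d2 c' = 0 := by
    have hi : i = 0 ∨ i = 1 ∨ i = 2 := by fin_cases i <;> simp
    rcases hi with rfl | rfl | rfl
    · refine bdry_zero_of_supp_pair M c' (e 1) (e 2) (e 0) 1 (-1) (Or.inl rfl)
        (Or.inr rfl) (fun v => by have := htri v; linarith) hne12 ?_
      intro f h1 h2
      by_cases h0 : f = e 0
      · rw [h0]; exact hsupp_i
      · exact hsupp_out f (fun j => by fin_cases j <;> assumption)
    · refine bdry_zero_of_supp_pair M c' (e 0) (e 2) (e 1) 1 1 (Or.inl rfl)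
        (Or.inl rfl) (fun v => by have := htri v; linarith) hne02 ?_
      intro f h0 h2
      by_cases h1 : f = e 1
      · rw [h1]; exact hsupp_i
      · exact hsupp_out f (fun j => by fin_cases j <;> assumption)
    · refine bdry_zero_of_supp_pair M c' (e 0) (e 1) (e 2) (-1) 1 (Or.inr rfl)
        (Or.inl rfl) (fun v => by have := htri v; linarith) hne01 ?_
      intro f h0 h1
      by_cases h2 : f = e 2
      · rw [h2]; exact hsupp_i
      · exact hsupp_out f (fun j => by fin_cases j <;> assumption)
  obtain ⟨k, hk⟩ := hgen c' hzero
  have hcnz := c_ne_zero M hcyc hc0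
  have hb0 : c' b = 0 := by
    rw [hc', if_neg]
    exact fun hba => hab (hEq.symm hba)
  have hbk : c' b = k * c b := by rw [hk]; simp
  have hk0 : k = 0 := by
    rcases mul_eq_zero.mp (hbk.symm.trans hb0) with h | h
    · exact h
    · exact absurd h (hcnz b)
  have ha0 : c' a = 0 := by rw [hk, hk0]; simp
  rw [hc', if_pos (hEq.refl a)] at ha0
  exact hcnz a ha0
end Aux6

/-- If `T` is a cut-triangle of an `ℳ`-complex `K` with classes represented by `a`
and `b`, then for each edge `e i` of `T`, each of the two equivalence classes of
2-cells induced by `T` contains exactly one 2-cell having `e i` as an edge. -/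
theorem cutTriangle_edge_classes {K2 K1 K0 : Type*} (M : MComplex K2 K1 K0)
    (e : Fin 3 → K1) (h : IsCutTriangle M e) (a b : K2)
    (hab : ¬ Relation.TransGen (shareOut M.d2 e) a b)
    (hcover : ∀ u : K2, Relation.TransGen (shareOut M.d2 e) u a ∨
      Relation.TransGen (shareOut M.d2 e) u b)
    (i : Fin 3) :
    (∃! u : K2, Relation.TransGen (shareOut M.d2 e) u a ∧ edgeOf M.d2 (e i) u) ∧
    (∃! u : K2, Relation.TransGen (shareOut M.d2 e) u b ∧ edgeOf M.d2 (e i) u) := by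
  obtain ⟨htri, hEq, -⟩ := h
  set R := Relation.TransGen (shareOut M.d2 e) with hR
  obtain ⟨u₀, v₀, huv, hu, hv, hall⟩ := M.edge_two (e i)
  have hdiff := key_diff M e htri hEq a b hab i huv hu hv hall
  have hnotboth : ∀ x : K2, R x a → R x b → False := fun x h1 h2 =>
    hab (hEq.trans (hEq.symm h1) h2)
  have hb_of_na : ∀ x : K2, ¬ R x a → R x b := fun x h1 =>
    (hcover x).resolve_left h1
  -- exactly one of u₀, v₀ is in the class of a
  by_cases hua : R u₀ a
  · have hva : ¬ R v₀ a := fun h' => hdiff ⟨fun _ => h', fun _ => hua⟩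
    have hvb : R v₀ b := hb_of_na v₀ hva
    constructor
    · refine ⟨u₀, ⟨hua, hu⟩, ?_⟩
      rintro x ⟨hxa, hxe⟩
      rcases hall x hxe with rfl | rfl
      · rfl
      · exact absurd hxa hva
    · refine ⟨v₀, ⟨hvb, hv⟩, ?_⟩
      rintro x ⟨hxb, hxe⟩
      rcases hall x hxe with rfl | rfl
      · exact absurd hxb (hnotboth x hua)
      · rfl
  · have hva : R v₀ a := by
      rcases hcover v₀ with h' | h'
      · exact h'
      · exfalso
        exact hdiff ⟨fun h'' => absurd h'' hua, fun h'' =>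
          absurd h'' (fun hva => hnotboth v₀ hva h')⟩
    have hub : R u₀ b := hb_of_na u₀ hua
    constructor
    · refine ⟨v₀, ⟨hva, hv⟩, ?_⟩
      rintro x ⟨hxa, hxe⟩
      rcases hall x hxe with rfl | rfl
      · exact absurd hxa hua
      · rfl
    · refine ⟨u₀, ⟨hub, hu⟩, ?_⟩
      rintro x ⟨hxb, hxe⟩
      rcases hall x hxe with rfl | rfl
      · rfl
      · exact absurd hxb (hnotboth x hva)
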